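/- For all natural numbers L, M, Σ_{j∈ℤ} (-1)^j q^(j²) [L+M choose L-j]_q [L+1+M choose L+1+j]_q = [L+M choose L]_{q²}. -/

import Mathlib

open LaurentPolynomial Finset

noncomputable section

/-- Gaussian binomial coefficient with natural indices, in base `x`, defined by the
`q`-Pascal recurrence `[n+1, k+1] = [n, k] + x^(k+1) * [n, k+1]`.  It vanishes for `k > n`. -/
def gaussAux (x : LaurentPolynomial ℤ) : ℕ → ℕ → LaurentPolynomial ℤ
  | _, 0 => 1
  | 0, _ + 1 => 0
  | n + 1, k + 1 => gaussAux x n k + x ^ (k + 1) * gaussAux x n (k + 1)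

/-- The Gaussian binomial coefficient `[n choose k]` in base `x`, for integer indices:
it is zero when `n < 0` or `k < 0` (and, by `gaussAux`, also when `k > n`). -/
def qbin (x : LaurentPolynomial ℤ) (n k : ℤ) : LaurentPolynomial ℤ :=
  if 0 ≤ n ∧ 0 ≤ k then gaussAux x n.toNat k.toNat else 0

/-- `(-1)^j` for an integer `j`, as a Laurent polynomial. -/
def m1 (j : ℤ) : LaurentPolynomial ℤ := ((((-1 : ℤˣ) ^ j : ℤˣ) : ℤ) : LaurentPolynomial ℤ)

/-!
Let `W(n, l) = ∑ⱼ (-1)^j q^(j²) [n, l - j]_q [n, l + j]_q` (`symmetricSum n l`). Pascal's rule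
`[n + 1, k] = [n, k - 1] + q^k [n, k]` applied to the last factor of the sum splits it into
`W(L + M, L)` plus a sum whose summand is odd under `j ↦ -1 - j`, hence zero. Applying Pascal's
rule to both factors of `W(n + 1, l + 1)` in the same way leaves, besides two such vanishing cross
sums, `W(n, l) + q^(2(l + 1)) W(n, l + 1)`. This is the `q²`-Pascal rule, and together with
`W(n, 0) = W(n, n) = 1` it identifies `W(n, l)` with `[n, l]_{q²}`.
-/

-- Together with `IsDomain`, this makes `R[T;T⁻¹]` additively torsion-free.
instance {R : Type*} [CommRing R] [CharZero R] : CharZero R[T;T⁻¹] :=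
  charZero_of_injective_algebraMap (R := Polynomial R) Polynomial.toLaurent_injective

lemma finsum_eq_zero_of_apply_sub_eq_neg {M : Type*} [AddCommGroup M] [IsAddTorsionFree M]
    {f : ℤ → M} (c : ℤ) (hf : ∀ j, f (c - j) = -f j) : ∑ᶠ j, f j = 0 := by
  rw [← self_eq_neg]
  calc ∑ᶠ j, f j = ∑ᶠ j, f (c - j) := (finsum_comp_equiv (Equiv.subLeft c)).symm
    _ = -∑ᶠ j, f j := by rw [finsum_congr hf, finsum_neg_distrib]

section Gauss

variable (x : LaurentPolynomial ℤ)

lemma gaussAux_zero_right (n : ℕ) : gaussAux x n 0 = 1 := by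
  cases n <;> rfl

lemma gaussAux_eq_zero_of_lt : ∀ {n k : ℕ}, n < k → gaussAux x n k = 0
  | 0, _ + 1, _ => rfl
  | n + 1, k + 1, h => by
    rw [gaussAux, gaussAux_eq_zero_of_lt (by omega), gaussAux_eq_zero_of_lt (by omega)]
    ring

lemma gaussAux_self : ∀ n : ℕ, gaussAux x n n = 1
  | 0 => rfl
  | n + 1 => by rw [gaussAux, gaussAux_self n, gaussAux_eq_zero_of_lt x (by omega)]; ring

lemma qbin_natCast (n k : ℕ) : qbin x n k = gaussAux x n k := by
  simp [qbin]

lemma qbin_eq_zero_of_neg (n : ℤ) {k : ℤ} (hk : k < 0) : qbin x n k = 0 := by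
  simp [qbin, hk.not_ge]

lemma qbin_eq_zero_of_lt {n k : ℤ} (h : n < k) : qbin x n k = 0 := by
  unfold qbin
  split_ifs
  · exact gaussAux_eq_zero_of_lt x (by omega)
  · rfl

lemma qbin_zero_right {n : ℤ} (hn : 0 ≤ n) : qbin x n 0 = 1 := by
  simp [qbin, hn, gaussAux_zero_right]

lemma qbin_self {n : ℤ} (hn : 0 ≤ n) : qbin x n n = 1 := by
  simp [qbin, hn, gaussAux_self]

lemma hasFiniteSupport_qbin (n : ℤ) : (qbin x n).HasFiniteSupport := by
  refine (Set.finite_Icc 0 n).subset fun k hk => ?_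
  by_contra hk'
  rw [Set.mem_Icc, not_and_or, not_le, not_le] at hk'
  rcases hk' with h | h
  · exact hk (qbin_eq_zero_of_neg x n h)
  · exact hk (qbin_eq_zero_of_lt x h)

@[fun_prop]
lemma hasFiniteSupport_qbin_sub (n l : ℤ) : Function.HasFiniteSupport fun j => qbin x n (l - j) :=
  (hasFiniteSupport_qbin x n).fun_comp_of_injective (sub_right_injective (b := l))

@[fun_prop]
lemma hasFiniteSupport_qbin_add (n l : ℤ) : Function.HasFiniteSupport fun j => qbin x n (l + j) :=
  (hasFiniteSupport_qbin x n).fun_comp_of_injective (add_right_injective l)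

end Gauss

lemma qbin_succ (c : ℤ) {n : ℤ} (hn : 0 ≤ n) (k : ℤ) :
    qbin (T c) (n + 1) k = qbin (T c) n (k - 1) + T (c * k) * qbin (T c) n k := by
  lift n to ℕ using hn
  rcases lt_trichotomy k 0 with hk | rfl | hk
  · simp only [qbin_eq_zero_of_neg _ _ hk, qbin_eq_zero_of_neg _ _ (show k - 1 < 0 by omega)]
    ring
  · rw [qbin_zero_right _ (by omega), qbin_zero_right _ (by omega),
      qbin_eq_zero_of_neg _ _ (by omega), mul_zero, T_zero, one_mul, zero_add]
  · lift k to ℕ using hk.le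
    obtain ⟨k, rfl⟩ : ∃ m, k = m + 1 := Nat.exists_eq_succ_of_ne_zero (by omega)
    push_cast
    rw [add_sub_cancel_right]
    simp only [← Nat.cast_succ, qbin_natCast, gaussAux, ← T_pow, mul_comm c]

lemma m1_neg (j : ℤ) : m1 (-j) = m1 j := by
  rw [m1, m1, zpow_neg, Int.units_inv_eq_self]

lemma m1_add_one (j : ℤ) : m1 (j + 1) = -m1 j := by
  simp [m1, zpow_add_one]

lemma m1_neg_one_sub (j : ℤ) : m1 (-1 - j) = -m1 j := by
  rw [show -1 - j = -(j + 1) by ring, m1_neg, m1_add_one]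

lemma finsum_cross_eq_zero (h : ℤ → LaurentPolynomial ℤ) (l : ℤ) :
    ∑ᶠ j, m1 j * T (j ^ 2) * T (l + 1 + j) * h (l - j) * h (l + 1 + j) = 0 :=
  finsum_eq_zero_of_apply_sub_eq_neg (-1) fun j => by
    have hT : T ((-1 - j) ^ 2) * T (l - j) = (T (j ^ 2) * T (l + 1 + j) : ℤ[T;T⁻¹]) := by
      rw [← T_add, ← T_add]; ring_nf
    rw [m1_neg_one_sub, show l + 1 + (-1 - j) = l - j by ring,
      show l - (-1 - j) = l + 1 + j by ring]
    linear_combination (-m1 j * h (l + 1 + j) * h (l - j)) * hT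

lemma finsum_cross_eq_zero' (h : ℤ → LaurentPolynomial ℤ) (l : ℤ) :
    ∑ᶠ j, m1 j * T (j ^ 2) * T (l + 1 - j) * h (l + 1 - j) * h (l + j) = 0 := by
  rw [← finsum_cross_eq_zero h l, ← finsum_comp_equiv (Equiv.neg ℤ)]
  refine finsum_congr fun j => ?_
  simp only [Equiv.neg_apply, m1_neg, neg_sq, sub_neg_eq_add, ← sub_eq_add_neg]
  ring

def symmetricTerm (n l j : ℤ) : LaurentPolynomial ℤ :=
  m1 j * T (j ^ 2) * qbin (T 1) n (l - j) * qbin (T 1) n (l + j)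

def symmetricSum (n l : ℤ) : LaurentPolynomial ℤ :=
  ∑ᶠ j, symmetricTerm n l j

@[fun_prop]
lemma hasFiniteSupport_symmetricTerm (n l : ℤ) : (symmetricTerm n l).HasFiniteSupport := by
  unfold symmetricTerm; fun_prop

lemma symmetricSum_eq_one {n l : ℤ} (hn : 0 ≤ n) (hl : l = 0 ∨ l = n) :
    symmetricSum n l = 1 := by
  rw [symmetricSum, finsum_eq_single _ 0]
  · rcases hl with rfl | rfl <;> simp [symmetricTerm, m1, qbin_zero_right, qbin_self, hn]
  · intro j hj
    obtain h | h | h | h : l - j < 0 ∨ n < l - j ∨ l + j < 0 ∨ n < l + j := by omega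
    all_goals simp [symmetricTerm, qbin_eq_zero_of_neg, qbin_eq_zero_of_lt, h]

lemma symmetricTerm_succ {n : ℤ} (hn : 0 ≤ n) (l j : ℤ) :
    symmetricTerm (n + 1) (l + 1) j =
      symmetricTerm n l j + T (2 * (l + 1)) * symmetricTerm n (l + 1) j
      + (m1 j * T (j ^ 2) * T (l + 1 + j) * qbin (T 1) n (l - j) * qbin (T 1) n (l + 1 + j)
        + m1 j * T (j ^ 2) * T (l + 1 - j) * qbin (T 1) n (l + 1 - j) * qbin (T 1) n (l + j)) := by
  have hT : T (l + 1 - j) * T (l + 1 + j) = (T (2 * (l + 1)) : LaurentPolynomial ℤ) := by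
    rw [← T_add]; ring_nf
  rw [symmetricTerm, qbin_succ 1 hn, qbin_succ 1 hn, show l + 1 - j - 1 = l - j by ring,
    show l + 1 + j - 1 = l + j by ring, one_mul, one_mul]
  simp only [symmetricTerm]
  linear_combination (m1 j * T (j ^ 2) * qbin (T 1) n (l + 1 - j) * qbin (T 1) n (l + 1 + j)) * hT

lemma symmetricSum_succ {n : ℤ} (hn : 0 ≤ n) (l : ℤ) :
    symmetricSum (n + 1) (l + 1) =
      symmetricSum n l + T (2 * (l + 1)) * symmetricSum n (l + 1) := by
  rw [symmetricSum, finsum_congr (symmetricTerm_succ hn l), finsum_add_distrib,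
    finsum_add_distrib, finsum_add_distrib, finsum_cross_eq_zero, finsum_cross_eq_zero', add_zero,
    add_zero, symmetricSum, symmetricSum, mul_finsum]
  all_goals fun_prop

lemma symmetricSum_eq_qbin_T_two (L M : ℕ) : symmetricSum (L + M) L = qbin (T 2) (L + M) L := by
  induction L generalizing M with
  | zero =>
    simp only [CharP.cast_eq_zero, zero_add]
    rw [symmetricSum_eq_one (by positivity) (.inl rfl), qbin_zero_right _ (by positivity)]
  | succ L ihL =>
    induction M with
    | zero =>
      simp only [CharP.cast_eq_zero, add_zero]
      rw [symmetricSum_eq_one (by positivity) (.inr rfl), qbin_self _ (by positivity)]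
    | succ M ihM =>
      have h1 := ihL (M + 1)
      push_cast at h1 ihM ⊢
      rw [show (L : ℤ) + 1 + (M + 1) = L + M + 1 + 1 by ring, symmetricSum_succ (by positivity),
        qbin_succ 2 (by positivity), add_sub_cancel_right,
        show (L : ℤ) + M + 1 = L + (M + 1) by ring, h1,
        show (L : ℤ) + (M + 1) = L + 1 + M by ring, ihM]

theorem stmt13 (L M : ℕ) :
    (∑ᶠ j : ℤ, m1 j * T (j ^ 2) *
        qbin (T 1) (L + M) (L - j) * qbin (T 1) ((L : ℤ) + 1 + M) ((L : ℤ) + 1 + j)) =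
      qbin (T 2) (L + M) L := by
  have hsplit : ∀ j : ℤ, m1 j * T (j ^ 2) *
        qbin (T 1) (L + M) (L - j) * qbin (T 1) ((L : ℤ) + 1 + M) ((L : ℤ) + 1 + j) =
      symmetricTerm (L + M) L j + m1 j * T (j ^ 2) * T (L + 1 + j) *
        qbin (T 1) (L + M) (L - j) * qbin (T 1) (L + M) (L + 1 + j) := by
    intro j
    rw [show (L : ℤ) + 1 + M = L + M + 1 by ring, qbin_succ 1 (by positivity),
      show (L : ℤ) + 1 + j - 1 = L + j by ring, one_mul, symmetricTerm]
    ring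
  rw [finsum_congr hsplit, finsum_add_distrib (by fun_prop) (by fun_prop), finsum_cross_eq_zero,
    add_zero]
  exact symmetricSum_eq_qbin_T_two L M
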